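/- arXiv:1505.01800 — 3 statements merged into one kernel-verified Lean document; each statement's English description precedes it below -/
import Mathlib

section
/- Let Σ be a closed hypersurface in Euclidean space R^{n+1} whose induced metric has positive scalar curvature. Then the mean curvature of Σ with respect to the outward unit normal is everywhere positive. -/
/- A closed (compact) hypersurface in R^{n+1} whose induced metric has positive scalar
curvature has everywhere positive mean curvature (w.r.t. the outward normal).
Abstracted: S is the (compact, connected) hypersurface; H its mean curvature, R the induced
scalar curvature, P = |Π|² the squared norm of the second fundamental form; the Gauss
equation in flat space gives R = H² - P; closedness gives a point where H ≥ 0. -/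
theorem stmt_0 {S : Type*} [TopologicalSpace S] [CompactSpace S] [PreconnectedSpace S]
    (H R P : S → ℝ) (hHcont : Continuous H)
    (hGauss : ∀ x, R x = (H x) ^ 2 - P x)
    (hP : ∀ x, 0 ≤ P x) (hR : ∀ x, 0 < R x)
    (hclosed : ∃ x, 0 ≤ H x) :
    ∀ x, 0 < H x := by
  have hne : ∀ x, H x ≠ 0 := by
    intro x hx
    have := hR x
    rw [hGauss x, hx] at this
    nlinarith [hP x]
  obtain ⟨x₀, hx₀⟩ := hclosed
  have hx₀' : 0 < H x₀ := lt_of_le_of_ne hx₀ (Ne.symm (hne x₀))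
  intro x
  by_contra h
  push_neg at h
  have hx' : H x < 0 := lt_of_le_of_ne h (hne x)
  have : (0 : ℝ) ∈ Set.range H := by
    have := intermediate_value_univ x x₀ hHcont
    exact this ⟨le_of_lt hx', le_of_lt hx₀'⟩
  obtain ⟨y, hy⟩ := this
  exact hne y hy
end

section
/- With σ as above (σ' = 1 + e^{−1/(s−s₀)²}, σ'' = −2e^{−1/(s−s₀)²}/(s−s₀)³ for s < s₀), for u smooth positive with u' ≥ 0 bounded on compact sets, the quantity (n−1) − (n−1)σ'(s)² − 2u(σ(s))u'(σ(s))σ''(s) equals e^{−1/(s−s₀)²}( −2(n−1) − (n−1)e^{−1/(s−s₀)²} − 4u(σ)u'(σ)/(s−s₀)³ ), and this is positive for all s ∈ [s₀−δ, s₀) when δ > 0 is sufficiently small. -/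
/- Near `s₀` from the left, `e^{-1/(s-s₀)²}` stays in `(0, 1]` while `-4uu'/(s-s₀)³` blows up
like `|s-s₀|⁻³` because `uu'` is continuous and positive at `s₀`; so the bracket tends to `+∞`
and is eventually positive. -/

open Real Filter Topology

theorem hasDerivAt_one_add_exp_neg_inv_sq {s₀ s : ℝ} (hs : s ≠ s₀) :
    HasDerivAt (fun x => 1 + exp (-1 / (x - s₀) ^ 2))
      (exp (-1 / (s - s₀) ^ 2) * (2 / (s - s₀) ^ 3)) s := by
  have hsub : s - s₀ ≠ 0 := sub_ne_zero.mpr hs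
  have hsq : HasDerivAt (fun x => (x - s₀) ^ 2) (2 * (s - s₀)) s := by
    simpa using ((hasDerivAt_id s).sub_const s₀).fun_pow 2
  have hinv : HasDerivAt (fun x => -1 / (x - s₀) ^ 2) (2 / (s - s₀) ^ 3) s := by
    rw [show (fun x => -1 / (x - s₀) ^ 2) = fun x => -((x - s₀) ^ 2)⁻¹ by funext x; ring]
    exact (hsq.fun_inv (pow_ne_zero 2 hsub)).fun_neg.congr_deriv (by field_simp)
  exact hinv.exp.const_add 1

theorem sub_sub_mul_deriv_one_add_exp_neg_inv_sq (c a : ℝ) {s₀ s : ℝ} (hs : s ≠ s₀) :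
    c - c * (1 + exp (-1 / (s - s₀) ^ 2)) ^ 2
        - 2 * a * deriv (fun x => 1 + exp (-1 / (x - s₀) ^ 2)) s =
      exp (-1 / (s - s₀) ^ 2) *
        (-2 * c - c * exp (-1 / (s - s₀) ^ 2) - 4 * a / (s - s₀) ^ 3) := by
  have hsub : s - s₀ ≠ 0 := sub_ne_zero.mpr hs
  rw [(hasDerivAt_one_add_exp_neg_inv_sq hs).deriv]
  field_simp
  ring

theorem tendsto_neg_div_sub_pow_three_nhdsLT_atTop {V : ℝ → ℝ} {s₀ v : ℝ}
    (hV : Tendsto V (𝓝[<] s₀) (𝓝 v)) (hv : 0 < v) :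
    Tendsto (fun s => -V s / (s - s₀) ^ 3) (𝓝[<] s₀) atTop := by
  have hcube : Tendsto (fun s => (s - s₀) ^ 3) (𝓝[<] s₀) (𝓝[<] 0) := by
    refine tendsto_nhdsWithin_iff.mpr ⟨?_, ?_⟩
    · exact ((by fun_prop : Continuous fun s : ℝ => (s - s₀) ^ 3).tendsto' s₀ 0 (by simp)).mono_left
        nhdsWithin_le_nhds
    · filter_upwards [self_mem_nhdsWithin] with s (hs : s < s₀)
      exact Odd.pow_neg (by decide) (sub_neg.mpr hs)
  have := hV.pos_mul_atBot hv (tendsto_inv_nhdsLT_zero.comp hcube)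
  simpa [neg_div, div_eq_mul_inv] using this

theorem tendsto_bending_factor_nhdsLT_atTop (c : ℝ) {V : ℝ → ℝ} {s₀ v : ℝ}
    (hV : Tendsto V (𝓝[<] s₀) (𝓝 v)) (hv : 0 < v) :
    Tendsto (fun s => -2 * c - c * exp (-1 / (s - s₀) ^ 2) - 4 * V s / (s - s₀) ^ 3)
      (𝓝[<] s₀) atTop := by
  have hbound : ∀ s, -3 * |c| ≤ -2 * c - c * exp (-1 / (s - s₀) ^ 2) := by
    intro s
    have he : exp (-1 / (s - s₀) ^ 2) ≤ 1 := exp_le_one_iff.mpr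
      (div_nonpos_of_nonpos_of_nonneg (by norm_num) (by positivity))
    have hce : c * exp (-1 / (s - s₀) ^ 2) ≤ |c| := by
      calc c * exp (-1 / (s - s₀) ^ 2) ≤ |c| * exp (-1 / (s - s₀) ^ 2) :=
            mul_le_mul_of_nonneg_right (le_abs_self c) (exp_pos _).le
        _ ≤ |c| := mul_le_of_le_one_right (abs_nonneg c) he
    linarith [le_abs_self c]
  have := tendsto_atTop_add_left_of_le _ _ hbound
    (tendsto_neg_div_sub_pow_three_nhdsLT_atTop (hV.const_mul 4) (mul_pos four_pos hv))
  simpa [sub_eq_add_neg, neg_div] using this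

theorem stmt_12_general (n : ℕ) (s₀ : ℝ) (u u' σ : ℝ → ℝ)
    (hv : Continuous fun s => u (σ s) * u' (σ s))
    (hv0 : 0 < u (σ s₀) * u' (σ s₀)) :
    ∀ θ E : ℝ → ℝ,
      (∀ s, θ s = 1 + Real.exp (-1 / (s - s₀) ^ 2)) →
      (∀ s, E s = ((n : ℝ) - 1) - ((n : ℝ) - 1) * (θ s) ^ 2
          - 2 * (u (σ s) * u' (σ s)) * deriv θ s) →
      (∀ s, s < s₀ →
        E s = Real.exp (-1 / (s - s₀) ^ 2) *
          (-2 * ((n : ℝ) - 1) - ((n : ℝ) - 1) * Real.exp (-1 / (s - s₀) ^ 2)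
            - 4 * (u (σ s) * u' (σ s)) / (s - s₀) ^ 3)) ∧
      ∃ δ > 0, ∀ s ∈ Set.Ico (s₀ - δ) s₀, 0 < E s := by
  intro θ E hθ hE
  have hfactor : ∀ s, s < s₀ → E s = exp (-1 / (s - s₀) ^ 2) *
      (-2 * ((n : ℝ) - 1) - ((n : ℝ) - 1) * exp (-1 / (s - s₀) ^ 2)
        - 4 * (u (σ s) * u' (σ s)) / (s - s₀) ^ 3) := fun s hs => by
    rw [hE, funext hθ]
    exact sub_sub_mul_deriv_one_add_exp_neg_inv_sq _ _ hs.ne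
  refine ⟨hfactor, ?_⟩
  have hpos : ∀ᶠ s in 𝓝[<] s₀, 0 < E s := by
    filter_upwards [(tendsto_bending_factor_nhdsLT_atTop ((n : ℝ) - 1)
        ((hv.tendsto s₀).mono_left nhdsWithin_le_nhds) hv0).eventually_gt_atTop 0,
      self_mem_nhdsWithin] with s hbracket (hs : s < s₀)
    rw [hfactor s hs]
    exact mul_pos (exp_pos _) hbracket
  obtain ⟨l, hl, hIco⟩ := mem_nhdsLT_iff_exists_Ico_subset.mp hpos
  exact ⟨s₀ - l, sub_pos.mpr hl, by rwa [sub_sub_cancel]⟩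

theorem stmt_12 (n : ℕ) (hn : 2 ≤ n) (s₀ : ℝ) (u u' σ : ℝ → ℝ)
    (hv : Continuous fun s => u (σ s) * u' (σ s))
    (hv0 : 0 < u (σ s₀) * u' (σ s₀)) :
    ∀ θ E : ℝ → ℝ,
      (∀ s, θ s = 1 + Real.exp (-1 / (s - s₀) ^ 2)) →
      (∀ s, E s = ((n : ℝ) - 1) - ((n : ℝ) - 1) * (θ s) ^ 2
          - 2 * (u (σ s) * u' (σ s)) * deriv θ s) →
      (∀ s, s < s₀ →
        E s = Real.exp (-1 / (s - s₀) ^ 2) *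
          (-2 * ((n : ℝ) - 1) - ((n : ℝ) - 1) * Real.exp (-1 / (s - s₀) ^ 2)
            - 4 * (u (σ s) * u' (σ s)) / (s - s₀) ^ 3)) ∧
      ∃ δ > 0, ∀ s ∈ Set.Ico (s₀ - δ) s₀, 0 < E s :=
  stmt_12_general n s₀ u u' σ hv hv0
end

section
/- Let f₁: [a₁,b₁] → R and f₂: [a₂,b₂] → R be smooth with f_i > 0, f_i' > 0, f_i'' > 0, satisfying f_i'' < ((n−1)/(2f_i))(1 − (f_i')²) (positive scalar curvature of dt²+f_i²g_*), and f₁(b₁) < f₂(a₂), f₁'(b₁) = f₂'(a₂). After translating so that a₂ − b₁ = (f₂(a₂) − f₁(b₁))/f₁'(b₁), the C^{1,1} function f̃ on [a₁,b₂] that equals f₁ on [a₁,b₁], equals f₂ on [a₂,b₂], and is the linear segment joining (b₁,f₁(b₁)) to (a₂,f₂(a₂)) on [b₁,a₂], satisfies: f̃ > 0, f̃' > 0, f̃ is C¹, and wherever f̃'' is defined it satisfies f̃'' < ((n−1)/(2f̃))(1 − (f̃')²). -/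
/-! The glued function is `f₁`, then the tangent line to `f₁` at `b₁`, then `f₂`. The translation
condition makes the tangent line hit `f₂` at `a₂`, and the slope condition makes it tangent
there too, so the function and its derivative glue continuously. The curvature inequality is
inherited on the outer pieces. On the line the left-hand side is `0`, while the right-hand side
is positive because `1 - f₁'(b₁)² > 0`: at `b₁` the inequality reads
`0 < f₁''(b₁) < ((n-1)/(2f₁(b₁)))(1 - f₁'(b₁)²)`. -/

open Set

noncomputable def threePiece (b a : ℝ) (f g h : ℝ → ℝ) (t : ℝ) : ℝ :=
  if t ≤ b then f t else if t < a then g t else h t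

theorem hasDerivAt_of_eqOn_Iic_of_eqOn_Ici {F F' f g : ℝ → ℝ} {p c q t : ℝ}
    (hf : ∀ t ∈ Icc p c, HasDerivAt f (F' t) t) (hg : ∀ t ∈ Icc c q, HasDerivAt g (F' t) t)
    (hFf : EqOn F f (Iic c)) (hFg : EqOn F g (Ici c)) (ht : t ∈ Icc p q) :
    HasDerivAt F (F' t) t := by
  rcases lt_trichotomy t c with htc | rfl | htc
  · exact (hf t ⟨ht.1, htc.le⟩).congr_of_eventuallyEq (hFf.eventuallyEq_of_mem (Iic_mem_nhds htc))
  · have h := ((hf t ⟨ht.1, le_rfl⟩).hasDerivWithinAt.congr hFf (hFf self_mem_Iic)).union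
      ((hg t ⟨le_rfl, ht.2⟩).hasDerivWithinAt.congr hFg (hFg self_mem_Ici))
    rwa [Iic_union_Ici, hasDerivWithinAt_univ] at h
  · exact (hg t ⟨htc.le, ht.2⟩).congr_of_eventuallyEq (hFg.eventuallyEq_of_mem (Ici_mem_nhds htc))

namespace threePiece

variable {b a p q : ℝ} {f g h : ℝ → ℝ}

theorem eqOn_left : EqOn (threePiece b a f g h) f (Iic b) := fun _ ht => if_pos ht

theorem eqOn_Ioo : EqOn (threePiece b a f g h) g (Ioo b a) := fun t ht => by
  simp [threePiece, not_le.2 ht.1, ht.2]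

theorem eqOn_middle (hfg : f b = g b) (hgh : g a = h a) :
    EqOn (threePiece b a f g h) g (Icc b a) := by
  intro t ht
  rcases ht.1.eq_or_lt with rfl | hbt
  · simp [threePiece, hfg]
  rcases ht.2.eq_or_lt with rfl | hta
  · simp [threePiece, not_le.2 hbt, hgh]
  · exact eqOn_Ioo ⟨hbt, hta⟩

theorem eqOn_right (hba : b < a) : EqOn (threePiece b a f g h) h (Ici a) := fun t ht => by
  simp [threePiece, not_le.2 (hba.trans_le ht), not_lt.2 (mem_Ici.1 ht)]

theorem mapsTo {s : Set ℝ} (hf : MapsTo f (Icc p b) s) (hg : MapsTo g (Icc b a) s)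
    (hh : MapsTo h (Icc a q) s) : MapsTo (threePiece b a f g h) (Icc p q) s := by
  intro t ht
  unfold threePiece
  split_ifs with htb hta
  · exact hf ⟨ht.1, htb⟩
  · exact hg ⟨le_of_not_ge htb, hta.le⟩
  · exact hh ⟨le_of_not_gt hta, ht.2⟩

theorem continuousOn (hba : b < a) (hfg : f b = g b) (hgh : g a = h a)
    (hf : ContinuousOn f (Icc p b)) (hg : ContinuousOn g (Icc b a))
    (hh : ContinuousOn h (Icc a q)) : ContinuousOn (threePiece b a f g h) (Icc p q) := by
  have hcover : Icc p q ⊆ Icc p b ∪ Icc b a ∪ Icc a q := by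
    rw [union_assoc]
    exact Icc_subset_Icc_union_Icc.trans (union_subset_union_right _ Icc_subset_Icc_union_Icc)
  refine ContinuousOn.mono ?_ hcover
  refine .union_of_isClosed (.union_of_isClosed ?_ ?_ isClosed_Icc isClosed_Icc) ?_
    (isClosed_Icc.union isClosed_Icc) isClosed_Icc
  · exact hf.congr (eqOn_left.mono Icc_subset_Iic_self)
  · exact hg.congr (eqOn_middle hfg hgh)
  · exact hh.congr ((eqOn_right hba).mono Icc_subset_Ici_self)

theorem hasDerivAt {F' : ℝ → ℝ} (hba : b < a) (hfg : f b = g b) (hgh : g a = h a)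
    (hf : ∀ t ∈ Icc p b, HasDerivAt f (F' t) t) (hg : ∀ t ∈ Icc b a, HasDerivAt g (F' t) t)
    (hh : ∀ t ∈ Icc a q, HasDerivAt h (F' t) t) {t : ℝ} (ht : t ∈ Icc p q) :
    HasDerivAt (threePiece b a f g h) (F' t) t := by
  let G t := if t < a then g t else h t
  have hGg : EqOn G g (Iic a) := fun t ht => by
    rcases (mem_Iic.1 ht).eq_or_lt with rfl | hta
    · simp [G, hgh]
    · simp [G, hta]
  have hGh : EqOn G h (Ici a) := fun t ht => if_neg (not_lt.2 ht)
  have hG : ∀ t ∈ Icc b q, HasDerivAt G (F' t) t := fun t ht =>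
    hasDerivAt_of_eqOn_Iic_of_eqOn_Ici hg hh hGg hGh ht
  refine hasDerivAt_of_eqOn_Iic_of_eqOn_Ici hf hG eqOn_left (fun t ht => ?_) ht
  rcases (mem_Ici.1 ht).eq_or_lt with rfl | hbt
  · simp [threePiece, G, hba, hfg]
  · simp [threePiece, G, not_le.2 hbt]

end threePiece

/-- `f'' < ((n - 1) / (2 f)) (1 - f'²)` is positivity of the scalar curvature of the warped
product `dt² + f(t)² g_*` over `[a, b]`. -/
structure IsPSCProfile (n a b : ℝ) (f f' f'' : ℝ → ℝ) : Prop where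
  hasDerivAt : ∀ t ∈ Icc a b, HasDerivAt f (f' t) t
  hasDerivAt_deriv : ∀ t ∈ Icc a b, HasDerivAt f' (f'' t) t
  pos : ∀ t ∈ Icc a b, 0 < f t
  deriv_pos : ∀ t ∈ Icc a b, 0 < f' t
  psc : ∀ t ∈ Icc a b, f'' t < (n - 1) / (2 * f t) * (1 - f' t ^ 2)

theorem one_sub_sq_pos_of_psc {n y y' y'' : ℝ} (hn : 1 < n) (hy : 0 < y) (hy'' : 0 < y'')
    (h : y'' < (n - 1) / (2 * y) * (1 - y' ^ 2)) : 0 < 1 - y' ^ 2 :=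
  pos_of_mul_pos_right (hy''.trans h) (div_pos (by linarith) (by linarith)).le

noncomputable def tangentGlue (b₁ a₂ : ℝ) (f₁ f₁' f₂ : ℝ → ℝ) : ℝ → ℝ :=
  threePiece b₁ a₂ f₁ (fun t => f₁ b₁ + (t - b₁) * f₁' b₁) f₂

noncomputable def tangentGlueDeriv (b₁ a₂ : ℝ) (f₁' f₂' : ℝ → ℝ) : ℝ → ℝ :=
  threePiece b₁ a₂ f₁' (fun _ => f₁' b₁) f₂'

namespace IsPSCProfile

variable {n a₁ b₁ a₂ b₂ : ℝ} {f₁ f₁' f₁'' f₂ f₂' f₂'' : ℝ → ℝ}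

theorem tangentLine_pos (h₁ : IsPSCProfile n a₁ b₁ f₁ f₁' f₁'') (hab₁ : a₁ < b₁) {t : ℝ}
    (ht : b₁ ≤ t) : 0 < f₁ b₁ + (t - b₁) * f₁' b₁ :=
  have hb₁ : b₁ ∈ Icc a₁ b₁ := right_mem_Icc.2 hab₁.le
  add_pos_of_pos_of_nonneg (h₁.pos b₁ hb₁) (mul_nonneg (sub_nonneg.2 ht) (h₁.deriv_pos b₁ hb₁).le)

theorem tangentGlue_pos (h₁ : IsPSCProfile n a₁ b₁ f₁ f₁' f₁'')
    (h₂ : IsPSCProfile n a₂ b₂ f₂ f₂' f₂'') (hab₁ : a₁ < b₁) :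
    ∀ t ∈ Icc a₁ b₂, 0 < tangentGlue b₁ a₂ f₁ f₁' f₂ t := fun _ ht =>
  threePiece.mapsTo h₁.pos (fun _ ht => h₁.tangentLine_pos hab₁ ht.1) h₂.pos ht

theorem tangentGlueDeriv_pos (h₁ : IsPSCProfile n a₁ b₁ f₁ f₁' f₁'')
    (h₂ : IsPSCProfile n a₂ b₂ f₂ f₂' f₂'') (hab₁ : a₁ < b₁) :
    ∀ t ∈ Icc a₁ b₂, 0 < tangentGlueDeriv b₁ a₂ f₁' f₂' t := fun _ ht =>
  threePiece.mapsTo h₁.deriv_pos (fun _ _ => h₁.deriv_pos b₁ (right_mem_Icc.2 hab₁.le))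
    h₂.deriv_pos ht

theorem continuousOn_tangentGlueDeriv (h₁ : IsPSCProfile n a₁ b₁ f₁ f₁' f₁'')
    (h₂ : IsPSCProfile n a₂ b₂ f₂ f₂' f₂'') (hba : b₁ < a₂) (hslope : f₁' b₁ = f₂' a₂) :
    ContinuousOn (tangentGlueDeriv b₁ a₂ f₁' f₂') (Icc a₁ b₂) :=
  threePiece.continuousOn hba rfl hslope
    (fun t ht => (h₁.hasDerivAt_deriv t ht).continuousAt.continuousWithinAt) continuousOn_const
    (fun t ht => (h₂.hasDerivAt_deriv t ht).continuousAt.continuousWithinAt)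

theorem hasDerivAt_tangentGlue (h₁ : IsPSCProfile n a₁ b₁ f₁ f₁' f₁'')
    (h₂ : IsPSCProfile n a₂ b₂ f₂ f₂' f₂'') (hab₁ : a₁ < b₁) (hba : b₁ < a₂)
    (hslope : f₁' b₁ = f₂' a₂) (htrans : a₂ - b₁ = (f₂ a₂ - f₁ b₁) / f₁' b₁) :
    ∀ t ∈ Icc a₁ b₂,
      HasDerivAt (tangentGlue b₁ a₂ f₁ f₁' f₂) (tangentGlueDeriv b₁ a₂ f₁' f₂' t) t := by
  set s := f₁' b₁
  have hval : f₁ b₁ + (a₂ - b₁) * s = f₂ a₂ := by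
    rw [htrans, div_mul_cancel₀ _ (h₁.deriv_pos b₁ (right_mem_Icc.2 hab₁.le)).ne']
    ring
  have hline : ∀ t, HasDerivAt (fun t => f₁ b₁ + (t - b₁) * s) s t := fun t =>
    ((((hasDerivAt_id' t).sub_const b₁).mul_const s).const_add (f₁ b₁)).congr_deriv (one_mul s)
  intro t ht
  exact threePiece.hasDerivAt hba (by simp) hval
    (fun t ht => (h₁.hasDerivAt t ht).congr_deriv (threePiece.eqOn_left ht.2).symm)
    (fun t ht =>
      (hline t).congr_deriv (threePiece.eqOn_middle (g := fun _ => s) rfl hslope ht).symm)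
    (fun t ht => (h₂.hasDerivAt t ht).congr_deriv (threePiece.eqOn_right hba ht.1).symm) ht

theorem psc_tangentGlue (h₁ : IsPSCProfile n a₁ b₁ f₁ f₁' f₁'')
    (h₂ : IsPSCProfile n a₂ b₂ f₂ f₂' f₂'') (hn : 1 < n) (hab₁ : a₁ < b₁) (hba : b₁ < a₂)
    (hconv : 0 < f₁'' b₁) :
    ∀ t ∈ Ioo a₁ b₁ ∪ Ioo b₁ a₂ ∪ Ioo a₂ b₂, ∃ c, HasDerivAt (tangentGlueDeriv b₁ a₂ f₁' f₂') c t ∧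
      c < (n - 1) / (2 * tangentGlue b₁ a₂ f₁ f₁' f₂ t) *
        (1 - tangentGlueDeriv b₁ a₂ f₁' f₂' t ^ 2) := by
  rintro t ((ht | ht) | ht)
  · have ht' := Ioo_subset_Icc_self ht
    refine ⟨f₁'' t, (h₁.hasDerivAt_deriv t ht').congr_of_eventuallyEq
      (threePiece.eqOn_left.eventuallyEq_of_mem (Iic_mem_nhds ht.2)), ?_⟩
    rw [tangentGlue, tangentGlueDeriv, threePiece.eqOn_left ht.2.le, threePiece.eqOn_left ht.2.le]
    exact h₁.psc t ht'
  · have hb₁ : b₁ ∈ Icc a₁ b₁ := right_mem_Icc.2 hab₁.le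
    have hs₁ := one_sub_sq_pos_of_psc hn (h₁.pos b₁ hb₁) hconv (h₁.psc b₁ hb₁)
    refine ⟨0, (hasDerivAt_const t (f₁' b₁)).congr_of_eventuallyEq
      (threePiece.eqOn_Ioo.eventuallyEq_of_mem (Ioo_mem_nhds ht.1 ht.2)), ?_⟩
    rw [tangentGlue, tangentGlueDeriv, threePiece.eqOn_Ioo ht, threePiece.eqOn_Ioo ht]
    have hline := h₁.tangentLine_pos hab₁ ht.1.le
    exact mul_pos (div_pos (by linarith) (by linarith)) hs₁
  · have ht' := Ioo_subset_Icc_self ht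
    refine ⟨f₂'' t, (h₂.hasDerivAt_deriv t ht').congr_of_eventuallyEq
      ((threePiece.eqOn_right hba).eventuallyEq_of_mem (Ici_mem_nhds ht.1)), ?_⟩
    rw [tangentGlue, tangentGlueDeriv, threePiece.eqOn_right hba ht.1.le,
      threePiece.eqOn_right hba ht.1.le]
    exact h₂.psc t ht'

end IsPSCProfile

theorem stmt_13_general (n : ℕ) (hn : 2 ≤ n) (a₁ b₁ a₂ b₂ : ℝ)
    (hab1 : a₁ < b₁) (hba : b₁ < a₂)
    (f₁ f₂ f₁' f₂' f₁'' f₂'' : ℝ → ℝ)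
    (hd1 : ∀ t ∈ Set.Icc a₁ b₁, HasDerivAt f₁ (f₁' t) t ∧ HasDerivAt f₁' (f₁'' t) t)
    (hd2 : ∀ t ∈ Set.Icc a₂ b₂, HasDerivAt f₂ (f₂' t) t ∧ HasDerivAt f₂' (f₂'' t) t)
    (hpos1 : ∀ t ∈ Set.Icc a₁ b₁, 0 < f₁ t ∧ 0 < f₁' t ∧ 0 < f₁'' t)
    (hpos2 : ∀ t ∈ Set.Icc a₂ b₂, 0 < f₂ t ∧ 0 < f₂' t ∧ 0 < f₂'' t)
    (hpsc1 : ∀ t ∈ Set.Icc a₁ b₁, f₁'' t < (((n : ℝ) - 1) / (2 * f₁ t)) * (1 - (f₁' t) ^ 2))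
    (hpsc2 : ∀ t ∈ Set.Icc a₂ b₂, f₂'' t < (((n : ℝ) - 1) / (2 * f₂ t)) * (1 - (f₂' t) ^ 2))
    (hslope : f₁' b₁ = f₂' a₂)
    (htrans : a₂ - b₁ = (f₂ a₂ - f₁ b₁) / f₁' b₁) :
    ∀ F : ℝ → ℝ,
      (∀ t, F t = if t ≤ b₁ then f₁ t else if t < a₂ then f₁ b₁ + (t - b₁) * f₁' b₁ else f₂ t) →
      (∀ t ∈ Set.Icc a₁ b₂, 0 < F t) ∧
      ∃ F' : ℝ → ℝ, ContinuousOn F' (Set.Icc a₁ b₂) ∧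
        (∀ t ∈ Set.Icc a₁ b₂, HasDerivAt F (F' t) t ∧ 0 < F' t) ∧
        (∀ t ∈ Set.Ioo a₁ b₁ ∪ Set.Ioo b₁ a₂ ∪ Set.Ioo a₂ b₂,
          ∃ c, HasDerivAt F' c t ∧ c < (((n : ℝ) - 1) / (2 * F t)) * (1 - (F' t) ^ 2)) := by
  intro F hF
  have h₁ : IsPSCProfile n a₁ b₁ f₁ f₁' f₁'' := ⟨fun t ht => (hd1 t ht).1,
    fun t ht => (hd1 t ht).2, fun t ht => (hpos1 t ht).1, fun t ht => (hpos1 t ht).2.1, hpsc1⟩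
  have h₂ : IsPSCProfile n a₂ b₂ f₂ f₂' f₂'' := ⟨fun t ht => (hd2 t ht).1,
    fun t ht => (hd2 t ht).2, fun t ht => (hpos2 t ht).1, fun t ht => (hpos2 t ht).2.1, hpsc2⟩
  obtain rfl : F = tangentGlue b₁ a₂ f₁ f₁' f₂ := funext hF
  refine ⟨h₁.tangentGlue_pos h₂ hab1, tangentGlueDeriv b₁ a₂ f₁' f₂',
    h₁.continuousOn_tangentGlueDeriv h₂ hba hslope,
    fun t ht => ⟨h₁.hasDerivAt_tangentGlue h₂ hab1 hba hslope htrans t ht,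
      h₁.tangentGlueDeriv_pos h₂ hab1 t ht⟩,
    h₁.psc_tangentGlue h₂ (by exact_mod_cast hn) hab1 hba (hpos1 b₁ (right_mem_Icc.2 hab1.le)).2.2⟩

theorem stmt_13 (n : ℕ) (hn : 2 ≤ n) (a₁ b₁ a₂ b₂ : ℝ)
    (hab1 : a₁ < b₁) (hba : b₁ < a₂) (hab2 : a₂ < b₂)
    (f₁ f₂ f₁' f₂' f₁'' f₂'' : ℝ → ℝ)
    (hd1 : ∀ t ∈ Set.Icc a₁ b₁, HasDerivAt f₁ (f₁' t) t ∧ HasDerivAt f₁' (f₁'' t) t)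
    (hd2 : ∀ t ∈ Set.Icc a₂ b₂, HasDerivAt f₂ (f₂' t) t ∧ HasDerivAt f₂' (f₂'' t) t)
    (hc1 : ContinuousOn f₁'' (Set.Icc a₁ b₁)) (hc2 : ContinuousOn f₂'' (Set.Icc a₂ b₂))
    (hpos1 : ∀ t ∈ Set.Icc a₁ b₁, 0 < f₁ t ∧ 0 < f₁' t ∧ 0 < f₁'' t)
    (hpos2 : ∀ t ∈ Set.Icc a₂ b₂, 0 < f₂ t ∧ 0 < f₂' t ∧ 0 < f₂'' t)
    (hpsc1 : ∀ t ∈ Set.Icc a₁ b₁, f₁'' t < (((n : ℝ) - 1) / (2 * f₁ t)) * (1 - (f₁' t) ^ 2))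
    (hpsc2 : ∀ t ∈ Set.Icc a₂ b₂, f₂'' t < (((n : ℝ) - 1) / (2 * f₂ t)) * (1 - (f₂' t) ^ 2))
    (hlt : f₁ b₁ < f₂ a₂) (hslope : f₁' b₁ = f₂' a₂)
    (htrans : a₂ - b₁ = (f₂ a₂ - f₁ b₁) / f₁' b₁) :
    ∀ F : ℝ → ℝ,
      (∀ t, F t = if t ≤ b₁ then f₁ t else if t < a₂ then f₁ b₁ + (t - b₁) * f₁' b₁ else f₂ t) →
      (∀ t ∈ Set.Icc a₁ b₂, 0 < F t) ∧
      ∃ F' : ℝ → ℝ, ContinuousOn F' (Set.Icc a₁ b₂) ∧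
        (∀ t ∈ Set.Icc a₁ b₂, HasDerivAt F (F' t) t ∧ 0 < F' t) ∧
        (∀ t ∈ Set.Ioo a₁ b₁ ∪ Set.Ioo b₁ a₂ ∪ Set.Ioo a₂ b₂,
          ∃ c, HasDerivAt F' c t ∧ c < (((n : ℝ) - 1) / (2 * F t)) * (1 - (F' t) ^ 2)) :=
  stmt_13_general n hn a₁ b₁ a₂ b₂ hab1 hba f₁ f₂ f₁' f₂' f₁'' f₂'' hd1 hd2 hpos1 hpos2 hpsc1 hpsc2
    hslope htrans
end
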